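/- Define h : (0, ∞) → ℝ by h(c) := c·√(1/4 + 1/c) − log((√(1/4 + 1/c) − 1/2)/(√(1/4 + 1/c) + 1/2)), using the real logarithm (the argument of the logarithm lies in (0,1), so h(c) > 0). Then h is strictly increasing on (0, ∞), h(c) → 0 as c → 0⁺, and h(c) → +∞ as c → +∞. Consequently, for every d > 0 there exists exactly one c₁ > 0 with h(c₁) = d. -/

import Mathlib

open Filter Set Topology

/-!
Substitute `s = √(1/4 + 1/c)`, which decreases from `∞` to `1/2` as `c` runs over `(0, ∞)`.
Since `c = 1/(s² - 1/4)`, the function becomes `s/(s² - 1/4) - log((s - 1/2)/(s + 1/2))`, whose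
derivative in `s` is `-2s²/(s² - 1/4)² < 0`; so `h` is strictly increasing. Near `0⁺`,
`c·s = √(c²/4 + c) → 0` and the argument of the logarithm tends to `1`. The logarithm is negative
and `s > 1/2`, so `h(c) ≥ c/2 → ∞`. The intermediate value theorem then gives existence of `c₁`,
and monotonicity its uniqueness.
-/

/-- The half-length function `h(c) = c·√(1/4 + 1/c) − log((√(1/4 + 1/c) − 1/2)/(√(1/4 + 1/c) + 1/2))`. -/
noncomputable def halfLength (c : ℝ) : ℝ :=
  c * Real.sqrt (1/4 + 1/c)
    - Real.log ((Real.sqrt (1/4 + 1/c) - 1/2) / (Real.sqrt (1/4 + 1/c) + 1/2))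

theorem ContinuousOn.surjOn_Ioi_of_tendsto_nhdsGT {α δ : Type*}
    [ConditionallyCompleteLinearOrder α] [TopologicalSpace α] [OrderTopology α] [DenselyOrdered α]
    [NoMaxOrder α] [LinearOrder δ] [TopologicalSpace δ] [OrderTopology δ] {a : α} {l : δ}
    {f : α → δ}
    (hf : ContinuousOn f (Ioi a)) (hbot : Tendsto f (𝓝[>] a) (𝓝 l))
    (htop : Tendsto f atTop atTop) : SurjOn f (Ioi a) (Ioi l) := by
  intro y (hy : l < y)
  obtain ⟨x₁, hfx₁, hx₁⟩ := ((hbot.eventually_lt_const hy).and self_mem_nhdsWithin).exists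
  obtain ⟨x₂, hfx₂, hx₁₂⟩ :=
    ((htop.eventually_ge_atTop y).and (eventually_ge_atTop x₁)).exists
  exact hf.surjOn_Icc hx₁ (lt_of_lt_of_le hx₁ hx₁₂) ⟨hfx₁.le, hfx₂⟩

lemma half_lt_sqrt_quarter_add_inv {c : ℝ} (hc : 0 < c) : 1/2 < √(1/4 + 1/c) := by
  rw [Real.lt_sqrt (by norm_num)]
  have : 0 < 1/c := one_div_pos.mpr hc
  linarith

lemma strictAntiOn_sqrt_quarter_add_inv :
    StrictAntiOn (fun c : ℝ => √(1/4 + 1/c)) (Ioi 0) := by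
  intro a (ha : 0 < a) b (_ : 0 < b) hab
  exact Real.sqrt_lt_sqrt (by positivity) (by gcongr)

/-- `halfLength c = halfLengthParam s` for `s = √(1/4 + 1/c)` (the paper's `s_b`), because
`c = 1/(s² - 1/4)`. -/
noncomputable def halfLengthParam (s : ℝ) : ℝ :=
  s / (s ^ 2 - 1/4) - (Real.log (s - 1/2) - Real.log (s + 1/2))

lemma halfLength_eq_halfLengthParam {c : ℝ} (hc : 0 < c) :
    halfLength c = halfLengthParam √(1/4 + 1/c) := by
  have hs := half_lt_sqrt_quarter_add_inv hc
  have hsq : √(1/4 + 1/c) ^ 2 - 1/4 = 1/c := by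
    rw [Real.sq_sqrt (by positivity)]; ring
  rw [halfLength, halfLengthParam, hsq, div_div_eq_mul_div, div_one, mul_comm,
    Real.log_div (by linarith) (by linarith)]

lemma hasDerivAt_halfLengthParam {s : ℝ} (hs : 1/2 < s) :
    HasDerivAt halfLengthParam (-(2 * s ^ 2) / (s ^ 2 - 1/4) ^ 2) s := by
  have hminus : s - 1/2 ≠ 0 := by linarith
  have hplus : s + 1/2 ≠ 0 := by linarith
  have hden : s ^ 2 - 1/4 ≠ 0 := by nlinarith
  have H : HasDerivAt (fun x => x / (x ^ 2 - 1/4) - (Real.log (x - 1/2) - Real.log (x + 1/2)))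
      _ s :=
    ((hasDerivAt_id' s).div ((hasDerivAt_pow 2 s).sub_const (1/4)) hden).sub
      ((((hasDerivAt_id' s).sub_const (1/2)).log hminus).sub
        (((hasDerivAt_id' s).add_const (1/2)).log hplus))
  refine H.congr_deriv ?_
  rw [div_sub_div _ _ hminus hplus, show (s - 1/2) * (s + 1/2) = s ^ 2 - 1/4 by ring]
  field_simp
  ring

lemma strictAntiOn_halfLengthParam : StrictAntiOn halfLengthParam (Ioi (1/2)) := by
  refine strictAntiOn_of_hasDerivWithinAt_neg (convex_Ioi _)
    (fun s hs => (hasDerivAt_halfLengthParam hs).continuousAt.continuousWithinAt)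
    (fun s hs => (hasDerivAt_halfLengthParam ?_).hasDerivWithinAt) (fun s hs => ?_)
  · simpa using hs
  · rw [interior_Ioi] at hs
    have hden : 0 < s ^ 2 - 1/4 := by nlinarith [mem_Ioi.mp hs]
    exact div_neg_of_neg_of_pos (by nlinarith) (by positivity)

lemma strictMonoOn_halfLength : StrictMonoOn halfLength (Ioi 0) :=
  (strictAntiOn_halfLengthParam.comp strictAntiOn_sqrt_quarter_add_inv
    fun _ hc => half_lt_sqrt_quarter_add_inv hc).congr
    fun _ hc => (halfLength_eq_halfLengthParam hc).symm

lemma continuousOn_halfLength : ContinuousOn halfLength (Ioi 0) := by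
  have hparam : ContinuousOn halfLengthParam (Ioi (1/2)) := fun _ hs =>
    (hasDerivAt_halfLengthParam hs).continuousAt.continuousWithinAt
  have hsqrt : ContinuousOn (fun c : ℝ => √(1/4 + 1/c)) (Ioi 0) :=
    Real.continuous_sqrt.comp_continuousOn
      (continuousOn_const.add (continuousOn_const.div continuousOn_id fun _ hc => ne_of_gt hc))
  exact (hparam.comp hsqrt fun _ hc => half_lt_sqrt_quarter_add_inv hc).congr
    fun _ hc => halfLength_eq_halfLengthParam hc

lemma tendsto_halfLength_nhdsGT_zero : Tendsto halfLength (𝓝[>] 0) (𝓝 0) := by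
  have hprod : Tendsto (fun c : ℝ => c * √(1/4 + 1/c)) (𝓝[>] 0) (𝓝 0) := by
    have hcont : Tendsto (fun c : ℝ => √(c ^ 2 / 4 + c)) (𝓝[>] 0) (𝓝 0) :=
      ((Continuous.tendsto' (by fun_prop) 0 0 (by simp))).mono_left nhdsWithin_le_nhds
    refine hcont.congr' (eventually_nhdsWithin_of_forall fun c (hc : 0 < c) => ?_)
    rw [show c ^ 2 / 4 + c = c ^ 2 * (1/4 + 1/c) by field_simp,
      Real.sqrt_mul (by positivity), Real.sqrt_sq hc.le]
  have hs : Tendsto (fun c : ℝ => √(1/4 + 1/c)) (𝓝[>] 0) atTop :=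
    Real.tendsto_sqrt_atTop.comp (tendsto_atTop_add_const_left _ _
      (tendsto_inv_nhdsGT_zero.congr fun _ => (one_div _).symm))
  -- `(s - 1/2)/(s + 1/2) = 1 - 1/(s + 1/2)`
  have hratio : Tendsto (fun s : ℝ => (s - 1/2) / (s + 1/2)) atTop (𝓝 1) := by
    have hinv : Tendsto (fun s : ℝ => 1 - (s + 1/2)⁻¹) atTop (𝓝 (1 - 0)) :=
      tendsto_const_nhds.sub (tendsto_inv_atTop_zero.comp (tendsto_atTop_add_const_right _ _
        tendsto_id))
    refine (sub_zero (1 : ℝ) ▸ hinv).congr' ?_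
    filter_upwards [eventually_gt_atTop 0] with s hs
    field_simp
    ring
  have hlog : Tendsto Real.log (𝓝 1) (𝓝 0) :=
    Real.log_one ▸ (Real.continuousAt_log one_ne_zero).tendsto
  have hsub := hprod.sub ((hlog.comp hratio).comp hs)
  rw [sub_zero] at hsub
  exact hsub

lemma div_two_le_halfLength {c : ℝ} (hc : 0 < c) : c / 2 ≤ halfLength c := by
  have hs := half_lt_sqrt_quarter_add_inv hc
  have hlog : Real.log ((√(1/4 + 1/c) - 1/2) / (√(1/4 + 1/c) + 1/2)) ≤ 0 :=
    Real.log_nonpos (div_nonneg (by linarith) (by linarith))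
      ((div_le_one (by linarith)).mpr (by linarith))
  have : c / 2 ≤ c * √(1/4 + 1/c) := by nlinarith
  rw [halfLength]
  linarith

lemma tendsto_halfLength_atTop : Tendsto halfLength atTop atTop :=
  tendsto_atTop_mono' _ ((eventually_gt_atTop 0).mono fun _ hc => div_two_le_halfLength hc)
    (tendsto_id.atTop_div_const two_pos)

/-- The function `h` is strictly increasing on `(0, ∞)`, tends to `0` at `0⁺`
and to `+∞` at `+∞`; consequently for every `d > 0` there is exactly one `c₁ > 0` with
`h(c₁) = d`. -/
theorem halfLength_strictly_increasing :
    StrictMonoOn halfLength (Ioi 0) ∧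
    Tendsto halfLength (nhdsWithin 0 (Ioi 0)) (nhds 0) ∧
    Tendsto halfLength atTop atTop ∧
    (∀ d : ℝ, 0 < d → ∃! c : ℝ, 0 < c ∧ halfLength c = d) := by
  refine ⟨strictMonoOn_halfLength, tendsto_halfLength_nhdsGT_zero, tendsto_halfLength_atTop,
    fun d hd => ?_⟩
  obtain ⟨c, hc, rfl⟩ := continuousOn_halfLength.surjOn_Ioi_of_tendsto_nhdsGT
    tendsto_halfLength_nhdsGT_zero tendsto_halfLength_atTop hd
  exact ⟨c, ⟨hc, rfl⟩, fun y ⟨hy, hyc⟩ => strictMonoOn_halfLength.injOn hy hc hyc⟩
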